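/- Let v_{i-1}, v_i, v_{i+1} be real numbers with b = v_{i+1} - v_i ≠ 0 and r = (v_i - v_{i-1})/b, and suppose r > 1. Then for every β with 0 ≤ β ≤ 1/(r - 1), the value P(β) = β·(3v_i - v_{i-1})/2 + (1-β)·(v_i + v_{i+1})/2 satisfies min(v_{i-1}, v_i, v_{i+1}) ≤ P(β) ≤ max(v_{i-1}, v_i, v_{i+1}). -/

import Mathlib

/-!
With `b = vp - v` and `v - vm = r b`, the weighted interpolant is
`P(β) = v + (1 + β (r - 1)) / 2 * b`, the point of the segment from `v` to `vp` at parameter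
`(1 + β (r - 1)) / 2`. The bound `β ≤ 1 / (r - 1)` keeps this parameter in `[1/2, 1]`, so `P(β)`
lies between `v` and `vp`, hence between the minimum and the maximum of the three values.
-/

open Set

lemma weighted_interpolant_eq_lineMap {vm v vp r : ℝ} (hrm : v - vm = r * (vp - v)) (β : ℝ) :
    β * (3 * v - vm) / 2 + (1 - β) * (v + vp) / 2 =
      AffineMap.lineMap v vp ((1 + β * (r - 1)) / 2) := by
  rw [AffineMap.lineMap_apply_ring']
  linear_combination β / 2 * hrm

lemma one_add_mul_sub_one_div_two_mem_Icc {r β : ℝ} (hr1 : 1 < r) (h0 : 0 ≤ β)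
    (h1 : β ≤ 1 / (r - 1)) : (1 + β * (r - 1)) / 2 ∈ Icc (0 : ℝ) 1 := by
  have hβr : β * (r - 1) ≤ 1 := (le_div_iff₀ (sub_pos.mpr hr1)).mp h1
  have hβr0 : 0 ≤ β * (r - 1) := mul_nonneg h0 (sub_nonneg.mpr hr1.le)
  constructor <;> linarith

lemma mem_Icc_min_max_of_mem_uIcc {x vm v vp : ℝ} (hx : x ∈ uIcc v vp) :
    min (min vm v) vp ≤ x ∧ x ≤ max (max vm v) vp :=
  ⟨(min_le_min_right vp (min_le_right vm v)).trans hx.1,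
    hx.2.trans (max_le_max_right vp (le_max_right vm v))⟩

theorem stmt_17 (vm v vp : ℝ) (hb : vp - v ≠ 0)
    (r : ℝ) (hr : r = (v - vm) / (vp - v)) (hr1 : 1 < r)
    (β : ℝ) (h0 : 0 ≤ β) (h1 : β ≤ 1 / (r - 1)) :
    min (min vm v) vp ≤ β * (3 * v - vm) / 2 + (1 - β) * (v + vp) / 2 ∧
      β * (3 * v - vm) / 2 + (1 - β) * (v + vp) / 2 ≤ max (max vm v) vp := by
  have hrm : v - vm = r * (vp - v) := by rw [hr, div_mul_cancel₀ _ hb]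
  apply mem_Icc_min_max_of_mem_uIcc
  rw [weighted_interpolant_eq_lineMap hrm, ← segment_eq_uIcc (𝕜 := ℝ)]
  exact lineMap_mem_segment ℝ v vp (one_add_mul_sub_one_div_two_mem_Icc hr1 h0 h1)
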